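/- arXiv:1110.1880 — 5 statements merged into one kernel-verified Lean document; each statement's English description precedes it below -/
import Mathlib

section
/- Let π be a probability density on Θ ⊆ ℝ^d, h : Θ → ℝ measurable with ∫ |h| π dθ > 0, and q a density with supp(π) ⊆ supp(q). Then the variance under q of the estimator w(θ)h(θ), with w = π/q, satisfies var_q[wh] ≥ (∫ |h(θ)| π(θ) dθ)^2 − (∫ h(θ) π(θ) dθ)^2, with equality when q(θ) ∝ |h(θ)| π(θ). -/
/-!
Write `a = |π h|` and `J = ∫ a`. For `q ≥ 0` vanishing only where `a` does, the pointwise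
AM-GM inequality `2 J a ≤ a² / q + J² q` integrates, using `∫ q = 1`, to
`2 J² ≤ ∫ a² / q + J²`, which is the lower bound. For `q = a / J` the integrand `a² / q` is
`J a`, whose integral is `J²`.
-/

open MeasureTheory Function

lemma two_mul_mul_abs_le_sq_div_mul_add {b q : ℝ} (c : ℝ) (hq : 0 ≤ q)
    (hb : q = 0 → b = 0) :
    2 * c * |b| ≤ (b / q) ^ 2 * q + c ^ 2 * q := by
  rcases hq.eq_or_lt with rfl | hq
  · simp [hb rfl]
  have hdiff : (b / q) ^ 2 * q + c ^ 2 * q - 2 * c * |b| = (|b| - c * q) ^ 2 / q := by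
    field_simp
    rw [← sq_abs b]
    ring
  have : 0 ≤ (|b| - c * q) ^ 2 / q := by positivity
  linarith

lemma sq_integral_abs_le_integral_sq_div_mul {α : Type*} [MeasurableSpace α] {μ : Measure α}
    {b q : α → ℝ} (hq0 : ∀ x, 0 ≤ q x) (hq1 : ∫ x, q x ∂μ = 1)
    (hsupp : support b ⊆ support q)
    (hb : Integrable (fun x => |b x|) μ) (hbq : Integrable (fun x => (b x / q x) ^ 2 * q x) μ) :
    (∫ x, |b x| ∂μ) ^ 2 ≤ ∫ x, (b x / q x) ^ 2 * q x ∂μ := by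
  set J := ∫ x, |b x| ∂μ
  have hq : Integrable q μ := Integrable.of_integral_ne_zero (by rw [hq1]; exact one_ne_zero)
  have hmono := integral_mono (hb.const_mul (2 * J)) (hbq.add (hq.const_mul (J ^ 2)))
    fun x => two_mul_mul_abs_le_sq_div_mul_add J (hq0 x) fun h0 => by_contra fun hb0 => hsupp hb0 h0
  simp only [Pi.add_apply] at hmono
  rw [integral_const_mul, integral_add hbq (hq.const_mul _), integral_const_mul, hq1] at hmono
  nlinarith

lemma sq_div_div_mul_div_of_abs_eq {a b : ℝ} (c : ℝ) (hab : |b| = a) :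
    (b / (a / c)) ^ 2 * (a / c) = c * a := by
  rcases eq_or_ne a 0 with rfl | ha
  · simp
  rcases eq_or_ne c 0 with rfl | hc
  · simp
  rw [div_pow, ← sq_abs b, hab]
  field_simp

theorem stmt_3_general {d : ℕ} (Θ : Set (Fin d → ℝ))
    (π h : (Fin d → ℝ) → ℝ)
    (hπ0 : ∀ θ, 0 ≤ π θ)
    (habsint : IntegrableOn (fun θ => |h θ| * π θ) Θ) :
    -- lower bound on the variance for any admissible density `q`
    (∀ q : (Fin d → ℝ) → ℝ, Measurable q → (∀ θ, 0 ≤ q θ) →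
      (∫ θ in Θ, q θ) = 1 →
      Function.support π ⊆ Function.support q →
      IntegrableOn (fun θ => (π θ * h θ / q θ)^2 * q θ) Θ →
      (∫ θ in Θ, (π θ * h θ / q θ)^2 * q θ) - (∫ θ in Θ, h θ * π θ)^2
        ≥ (∫ θ in Θ, |h θ| * π θ)^2 - (∫ θ in Θ, h θ * π θ)^2) ∧
    -- equality for `q* ∝ |h|·π`
    ((∫ θ in Θ,
        (π θ * h θ / (|h θ| * π θ / (∫ θ' in Θ, |h θ'| * π θ')))^2
          * (|h θ| * π θ / (∫ θ' in Θ, |h θ'| * π θ')))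
      - (∫ θ in Θ, h θ * π θ)^2
      = (∫ θ in Θ, |h θ| * π θ)^2 - (∫ θ in Θ, h θ * π θ)^2) := by
  have habs : ∀ θ, |π θ * h θ| = |h θ| * π θ := fun θ => by
    rw [abs_mul, abs_of_nonneg (hπ0 θ), mul_comm]
  refine ⟨fun q _ hq0 hq1 hsupp hint => ?_, ?_⟩
  · have hbound := sq_integral_abs_le_integral_sq_div_mul hq0 hq1
      ((support_mul_subset_left π h).trans hsupp) (by simp only [habs]; exact habsint) hint
    simp only [habs] at hbound
    linarith
  · simp_rw [sq_div_div_mul_div_of_abs_eq _ (habs _), integral_const_mul]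
    ring

/-- Kahn–Marshall optimality: for any importance sampling density `q` with
`supp π ⊆ supp q`, the variance of the unnormalized estimator `w·h` (with
`w = π/q`, `θ ~ q`) is at least `(∫|h|π)² − (∫hπ)²`, and this lower bound is
attained by `q*(θ) = |h(θ)|π(θ)/∫|h|π`. -/
theorem stmt_3 {d : ℕ} (Θ : Set (Fin d → ℝ)) (hΘ : MeasurableSet Θ)
    (π h : (Fin d → ℝ) → ℝ)
    (hπm : Measurable π) (hπ0 : ∀ θ, 0 ≤ π θ)
    (hπ1 : ∫ θ in Θ, π θ = 1)
    (hhm : Measurable h)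
    (hhπint : IntegrableOn (fun θ => h θ * π θ) Θ)
    (habsint : IntegrableOn (fun θ => |h θ| * π θ) Θ)
    (hJpos : 0 < ∫ θ in Θ, |h θ| * π θ) :
    -- lower bound on the variance for any admissible density `q`
    (∀ q : (Fin d → ℝ) → ℝ, Measurable q → (∀ θ, 0 ≤ q θ) →
      (∫ θ in Θ, q θ) = 1 →
      Function.support π ⊆ Function.support q →
      IntegrableOn (fun θ => (π θ * h θ / q θ)^2 * q θ) Θ →
      (∫ θ in Θ, (π θ * h θ / q θ)^2 * q θ) - (∫ θ in Θ, h θ * π θ)^2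
        ≥ (∫ θ in Θ, |h θ| * π θ)^2 - (∫ θ in Θ, h θ * π θ)^2) ∧
    -- equality for `q* ∝ |h|·π`
    ((∫ θ in Θ,
        (π θ * h θ / (|h θ| * π θ / (∫ θ' in Θ, |h θ'| * π θ')))^2
          * (|h θ| * π θ / (∫ θ' in Θ, |h θ'| * π θ')))
      - (∫ θ in Θ, h θ * π θ)^2
      = (∫ θ in Θ, |h θ| * π θ)^2 - (∫ θ in Θ, h θ * π θ)^2) :=
  stmt_3_general Θ π h hπ0 habsint
end

section
/- Let π_j be a probability density on Θ, let θ_{j-1}^{(1)}, ..., θ_{j-1}^{(N)} ∈ Θ be fixed points with positive weights w̄^{(1)}, ..., w̄^{(N)} summing to 1, let q_j(·|·) be a symmetric proposal density, and define on Θ* = Θ \ {θ_{j-1}^{(1)}, ..., θ_{j-1}^{(N)}} the function π̂(θ) = Σ_{i=1}^N w̄^{(i)} q_j(θ|θ_{j-1}^{(i)}) min{1, π_j(θ)/π_j(θ_{j-1}^{(i)})}. Then the function E(θ, ξ) = π_j(θ) π̂(ξ) min{1, (π_j(ξ)π̂(θ))/(π_j(θ)π̂(ξ))} is symmetric in θ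 and ξ for all θ, ξ ∈ Θ* with π_j(θ), π_j(ξ), π̂(θ), π̂(ξ) > 0; consequently, the AIMS transition kernel satisfies detailed balance with respect to π_j on Θ*. -/
lemma mul_min_one_div {K : Type*} [Field K] [LinearOrder K] [IsStrictOrderedRing K]
    {a : K} (b : K) (ha : 0 < a) : a * min 1 (b / a) = min a b := by
  rw [mul_min_of_nonneg _ _ ha.le, mul_one, mul_div_cancel₀ _ ha.ne']

theorem stmt_5_general {Θ : Type*} (πj : Θ → ℝ) (N : ℕ)
    (pts : Fin N → Θ)
    (πhat : Θ → ℝ) :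
    ∀ θ ξ, θ ∉ Set.range pts → ξ ∉ Set.range pts →
      0 < πj θ → 0 < πj ξ → 0 < πhat θ → 0 < πhat ξ →
      πj θ * πhat ξ * min 1 (πj ξ * πhat θ / (πj θ * πhat ξ))
        = πj ξ * πhat θ * min 1 (πj θ * πhat ξ / (πj ξ * πhat θ)) := by
  intro θ ξ _ _ hθ hξ hθ' hξ'
  rw [mul_min_one_div _ (by positivity), mul_min_one_div _ (by positivity), min_comm]

/-- Core of Theorem 1 of the AIMS paper. Let `π_j` be a probability density,
`θ⁽¹⁾,…,θ⁽ᴺ⁾` fixed points with positive normalized weights `w̄`, `q_j` a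
symmetric proposal density, and let
`π̂(θ) = ∑ᵢ w̄ⁱ q_j(θ|θ⁽ⁱ⁾) min{1, π_j(θ)/π_j(θ⁽ⁱ⁾)}` on
`Θ* = Θ \ {θ⁽¹⁾,…,θ⁽ᴺ⁾}`. Then
`E(θ,ξ) = π_j(θ) π̂(ξ) min{1, π_j(ξ)π̂(θ)/(π_j(θ)π̂(ξ))}`
is symmetric in `θ, ξ ∈ Θ*` whenever all quantities involved are positive;
i.e. the AIMS transition kernel satisfies detailed balance w.r.t. `π_j`. -/
theorem stmt_5 {Θ : Type*} (πj : Θ → ℝ) (N : ℕ)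
    (pts : Fin N → Θ) (w : Fin N → ℝ)
    (hw : ∀ i, 0 < w i) (hw1 : ∑ i, w i = 1)
    (qj : Θ → Θ → ℝ)  -- `qj θ ξ` is `q_j(θ|ξ)`
    (hq0 : ∀ θ ξ, 0 ≤ qj θ ξ) (hqsym : ∀ θ ξ, qj θ ξ = qj ξ θ)
    (πhat : Θ → ℝ)
    (hπhat : ∀ θ, πhat θ
      = ∑ i, w i * qj θ (pts i) * min 1 (πj θ / πj (pts i))) :
    ∀ θ ξ, θ ∉ Set.range pts → ξ ∉ Set.range pts →
      0 < πj θ → 0 < πj ξ → 0 < πhat θ → 0 < πhat ξ →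
      πj θ * πhat ξ * min 1 (πj ξ * πhat θ / (πj θ * πhat ξ))
        = πj ξ * πhat θ * min 1 (πj θ * πhat ξ / (πj ξ * πhat θ)) :=
  stmt_5_general πj N pts πhat
end

section
/- Let Θ ⊂ ℝ^d be compact, π_j a positive continuous probability density on Θ, points θ^{(1)}, ..., θ^{(N)} ∈ Θ with positive weights w̄^{(i)} summing to 1, and q_j(θ|ξ) = N(θ|ξ, c²I) a Gaussian density. Define π̂(θ) = Σ_i w̄^{(i)} q_j(θ|θ^{(i)}) min{1, π_j(θ)/π_j(θ^{(i)})}. Then π_j(θ) ≤ M π̂(θ) for all θ ∈ Θ \ {θ^{(1)}, ..., θ^{(N)}}, where M = (Σ_i w̄^{(i)} · min_{θ∈Θ} q_j(θ|θ^{(i)}) / max_{θ∈Θ} π_j(θ))^{-1}. -/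
/-!
The Gaussian proposals are continuous and positive, so on the compact set `Θ` each
`q_j(·|θ⁽ⁱ⁾)` attains a positive minimum and `π_j` a finite maximum `P`. Since both
`π_j(θ)` and `π_j(θ⁽ⁱ⁾)` are at most `P`, we have `π_j(θ) / P ≤ min{1, π_j(θ)/π_j(θ⁽ⁱ⁾)}`,
and summing `w̄ⁱ · min q_j(·|θ⁽ⁱ⁾) · π_j(θ) / P ≤ w̄ⁱ q_j(θ|θ⁽ⁱ⁾) min{1, π_j(θ)/π_j(θ⁽ⁱ⁾)}`
over `i` gives `M⁻¹ π_j(θ) ≤ π̂(θ)`.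
-/

section Compact

variable {X : Type*} [TopologicalSpace X] {Θ : Set X} {f : X → ℝ}

theorem IsCompact.le_ciSup_subtype (hΘ : IsCompact Θ) (hf : ContinuousOn f Θ) {x : X}
    (hx : x ∈ Θ) : f x ≤ ⨆ θ : Θ, f θ :=
  le_ciSup (f := fun θ : Θ => f θ) (Set.image_eq_range f Θ ▸ hΘ.bddAbove_image hf) ⟨x, hx⟩

theorem IsCompact.ciInf_subtype_le (hΘ : IsCompact Θ) (hf : ContinuousOn f Θ) {x : X}
    (hx : x ∈ Θ) : ⨅ θ : Θ, f θ ≤ f x :=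
  ciInf_le (f := fun θ : Θ => f θ) (Set.image_eq_range f Θ ▸ hΘ.bddBelow_image hf) ⟨x, hx⟩

theorem IsCompact.ciInf_subtype_pos (hΘ : IsCompact Θ) (hne : Θ.Nonempty)
    (hf : ContinuousOn f Θ) (hpos : ∀ x ∈ Θ, 0 < f x) : 0 < ⨅ θ : Θ, f θ := by
  have : Nonempty Θ := hne.to_subtype
  obtain ⟨xmin, hxmin, hmin⟩ := hΘ.exists_isMinOn hne hf
  exact (hpos xmin hxmin).trans_le (le_ciInf fun θ => hmin θ.2)

end Compact

theorem div_le_min_one_div {a b P : ℝ} (ha : 0 ≤ a) (hb : 0 < b) (haP : a ≤ P) (hbP : b ≤ P) :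
    a / P ≤ min 1 (a / b) :=
  le_min (div_le_one_of_le₀ haP (ha.trans haP)) (div_le_div_of_nonneg_left ha hb hbP)

theorem le_inv_sum_mul_sum_mul_min_one_div {X ι : Type*} [TopologicalSpace X] [Fintype ι]
    [Nonempty ι] {Θ : Set X} (hΘ : IsCompact Θ) {π : X → ℝ} (hπ : ContinuousOn π Θ)
    (hπpos : ∀ θ ∈ Θ, 0 < π θ) {pts : ι → X} (hpts : ∀ i, pts i ∈ Θ) {w : ι → ℝ}
    (hw : ∀ i, 0 < w i) {q : ι → X → ℝ} (hq : ∀ i, ContinuousOn (q i) Θ)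
    (hqpos : ∀ i, ∀ θ ∈ Θ, 0 < q i θ) {θ : X} (hθ : θ ∈ Θ) :
    π θ ≤ (∑ i, w i * (⨅ θ' : Θ, q i θ') / (⨆ θ' : Θ, π θ'))⁻¹
      * ∑ i, w i * q i θ * min 1 (π θ / π (pts i)) := by
  set P := ⨆ θ' : Θ, π θ'
  have hπP : ∀ x ∈ Θ, π x ≤ P := fun x hx => hΘ.le_ciSup_subtype hπ hx
  have hP : 0 < P := (hπpos θ hθ).trans_le (hπP θ hθ)
  have hqmin : ∀ i, 0 < ⨅ θ' : Θ, q i θ' := fun i =>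
    hΘ.ciInf_subtype_pos ⟨θ, hθ⟩ (hq i) (hqpos i)
  have hS : 0 < ∑ i, w i * (⨅ θ' : Θ, q i θ') / P :=
    Finset.sum_pos (fun i _ => by have := hw i; have := hqmin i; positivity)
      Finset.univ_nonempty
  rw [le_inv_mul_iff₀ hS, Finset.sum_mul]
  refine Finset.sum_le_sum fun i _ => ?_
  calc w i * (⨅ θ' : Θ, q i θ') / P * π θ
      = w i * (⨅ θ' : Θ, q i θ') * (π θ / P) := by ring
    _ ≤ w i * q i θ * min 1 (π θ / π (pts i)) := by
      have hwi := hw i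
      have hqi := hqpos i θ hθ
      have hπθ := hπpos θ hθ
      refine mul_le_mul (mul_le_mul_of_nonneg_left (hΘ.ciInf_subtype_le (hq i) hθ) hwi.le)
        (div_le_min_one_div hπθ.le (hπpos _ (hpts i)) (hπP θ hθ) (hπP _ (hpts i)))
        ?_ ?_ <;> positivity

theorem gaussian_pos {E : Type*} [NormedAddCommGroup E] {c : ℝ} (hc : c ≠ 0) (d : ℕ) (x : E) :
    0 < (2 * Real.pi * c ^ 2) ^ (-(d : ℝ) / 2) * Real.exp (-‖x‖ ^ 2 / (2 * c ^ 2)) := by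
  have : 0 < 2 * Real.pi * c ^ 2 := by positivity
  positivity

theorem stmt_10_general {d : ℕ} (Θ : Set (EuclideanSpace ℝ (Fin d)))
    (hΘc : IsCompact Θ)
    (πj : EuclideanSpace ℝ (Fin d) → ℝ)
    (hπjcont : Continuous πj) (hπjpos : ∀ θ ∈ Θ, 0 < πj θ)
    (N : ℕ) (pts : Fin N → EuclideanSpace ℝ (Fin d)) (hpts : ∀ i, pts i ∈ Θ)
    (w : Fin N → ℝ) (hw : ∀ i, 0 < w i) (hw1 : ∑ i, w i = 1)
    (c : ℝ) (hc : 0 < c)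
    (qj : EuclideanSpace ℝ (Fin d) → EuclideanSpace ℝ (Fin d) → ℝ)
    (hqj : ∀ θ ξ, qj θ ξ
      = (2 * Real.pi * c ^ 2) ^ (-(d : ℝ) / 2)
        * Real.exp (-‖θ - ξ‖ ^ 2 / (2 * c ^ 2)))
    : ∀ θ ∈ Θ, θ ∉ Set.range pts →
      πj θ ≤ (∑ i, w i * (⨅ θ' : Θ, qj θ' (pts i)) / (⨆ θ' : Θ, πj θ'))⁻¹
        * (∑ i, w i * qj θ (pts i) * min 1 (πj θ / πj (pts i))) := by
  intro θ hθ _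
  have : Nonempty (Fin N) := by
    by_contra h
    simp [not_nonempty_iff.mp h] at hw1
  refine le_inv_sum_mul_sum_mul_min_one_div (q := fun i θ' => qj θ' (pts i)) hΘc
    hπjcont.continuousOn hπjpos hpts hw (fun i => ?_) (fun i θ' _ => ?_) hθ
  · simp only [hqj]
    fun_prop
  · rw [hqj]
    exact gaussian_pos hc.ne' d _

/-- Corollary 1 of the AIMS paper. Let `Θ ⊂ ℝ^d` be compact, `π_j` a positive
continuous probability density on `Θ`, `θ⁽¹⁾,…,θ⁽ᴺ⁾ ∈ Θ` points with positive
weights summing to one, and `q_j(θ|ξ) = N(θ|ξ, c²I)` a Gaussian proposal density.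
With `π̂(θ) = ∑ᵢ w̄ⁱ q_j(θ|θ⁽ⁱ⁾) min{1, π_j(θ)/π_j(θ⁽ⁱ⁾)}`, the domination
condition `π_j(θ) ≤ M π̂(θ)` holds on `Θ \ {θ⁽¹⁾,…,θ⁽ᴺ⁾}` with
`M = (∑ᵢ w̄ⁱ · min_{θ∈Θ} q_j(θ|θ⁽ⁱ⁾) / max_{θ∈Θ} π_j(θ))⁻¹`. -/
theorem stmt_10 {d : ℕ} (Θ : Set (EuclideanSpace ℝ (Fin d)))
    (hΘc : IsCompact Θ) (hΘne : Θ.Nonempty)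
    (πj : EuclideanSpace ℝ (Fin d) → ℝ)
    (hπjcont : Continuous πj) (hπjpos : ∀ θ ∈ Θ, 0 < πj θ)
    (hπj1 : ∫ θ in Θ, πj θ = 1)
    (N : ℕ) (pts : Fin N → EuclideanSpace ℝ (Fin d)) (hpts : ∀ i, pts i ∈ Θ)
    (w : Fin N → ℝ) (hw : ∀ i, 0 < w i) (hw1 : ∑ i, w i = 1)
    (c : ℝ) (hc : 0 < c)
    (qj : EuclideanSpace ℝ (Fin d) → EuclideanSpace ℝ (Fin d) → ℝ)
    (hqj : ∀ θ ξ, qj θ ξ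
      = (2 * Real.pi * c ^ 2) ^ (-(d : ℝ) / 2)
        * Real.exp (-‖θ - ξ‖ ^ 2 / (2 * c ^ 2)))
    : ∀ θ ∈ Θ, θ ∉ Set.range pts →
      πj θ ≤ (∑ i, w i * (⨅ θ' : Θ, qj θ' (pts i)) / (⨆ θ' : Θ, πj θ'))⁻¹
        * (∑ i, w i * qj θ (pts i) * min 1 (πj θ / πj (pts i))) :=
  stmt_10_general Θ hΘc πj hπjcont hπjpos N pts hpts w hw hw1 c hc qj hqj
end

section
/- Let π be a probability density on Θ and π̂ a probability density on Θ satisfying π(θ) ≤ M π̂(θ) for all θ, with M ≥ 1. Then the expected acceptance probability of the Independent Metropolis–Hastings algorithm at stationarity, Ā = ∫∫ π(θ) π̂(ξ) min{1, (π(ξ)π̂(θ))/(π(θ)π̂(ξ))} dξ dθ, satisfies Ā ≥ 1/M. -/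
/-!
Writing `a = π(θ) π̂(ξ)` and `b = π(ξ) π̂(θ)`, the integrand `a · min 1 (b / a)` is just
`min a b`, and the domination `π ≤ M π̂` bounds both `a` and `b` below by `π(θ) π(ξ) / M`.
Integrating this pointwise bound gives `Ā ≥ (∫ π)² / M = 1 / M`.
-/

open MeasureTheory

lemma mul_min_one_div_eq_min {a b : ℝ} (ha : 0 ≤ a) (hb : 0 ≤ b) :
    a * min 1 (b / a) = min a b := by
  rcases ha.eq_or_lt with rfl | ha
  · simp [hb]
  · rw [mul_min_of_nonneg _ _ ha.le, mul_one, mul_div_cancel₀ _ ha.ne']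

lemma mul_div_le_min_mul_of_le_mul {M x y x' y' : ℝ} (hM : 0 < M) (hx : 0 ≤ x) (hy : 0 ≤ y)
    (hxx' : x ≤ M * x') (hyy' : y ≤ M * y') : x * y / M ≤ min (x * y') (y * x') :=
  le_min ((div_le_iff₀ hM).2 (by nlinarith)) ((div_le_iff₀ hM).2 (by nlinarith))

section

variable {α : Type*} [MeasurableSpace α] {μ : Measure α} {p q : α → ℝ}

lemma integrable_min_mul_prod [SigmaFinite μ] (hp : Integrable p μ) (hq : Integrable q μ) :
    Integrable (fun z : α × α => min (p z.1 * q z.2) (p z.2 * q z.1)) (μ.prod μ) :=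
  (hp.mul_prod hq).inf ((hq.mul_prod hp).congr (ae_of_all _ fun _ => mul_comm _ _))

lemma sq_integral_div_le_integral_integral_min [SigmaFinite μ] {M : ℝ} (hM : 0 < M)
    (hp0 : ∀ θ, 0 ≤ p θ) (hp : Integrable p μ) (hq : Integrable q μ)
    (hdom : ∀ θ, p θ ≤ M * q θ) :
    (∫ θ, p θ ∂μ) ^ 2 / M ≤ ∫ θ, ∫ ξ, min (p θ * q ξ) (p ξ * q θ) ∂μ ∂μ :=
  calc (∫ θ, p θ ∂μ) ^ 2 / M = ∫ θ, ∫ ξ, p θ * p ξ / M ∂μ ∂μ := by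
        simp only [mul_div_assoc, integral_const_mul, integral_div, integral_mul_const]
        ring
    _ ≤ ∫ θ, ∫ ξ, min (p θ * q ξ) (p ξ * q θ) ∂μ ∂μ :=
        integral_mono ((hp.mul_prod hp).div_const M).integral_prod_left
          (integrable_min_mul_prod hp hq).integral_prod_left fun θ =>
          integral_mono ((hp.const_mul (p θ)).div_const M)
            ((hq.const_mul (p θ)).inf (hp.mul_const (q θ))) fun ξ =>
            mul_div_le_min_mul_of_le_mul hM (hp0 θ) (hp0 ξ) (hdom θ) (hdom ξ)

end

theorem stmt_12_general {α : Type*} [MeasurableSpace α] (μ : Measure α) [SigmaFinite μ]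
    (π πhat : α → ℝ)
    (hπ0 : ∀ θ, 0 ≤ π θ) (hπhat0 : ∀ θ, 0 ≤ πhat θ)
    (hπ1 : ∫ θ, π θ ∂μ = 1)
    (hπint : Integrable π μ) (hπhatint : Integrable πhat μ)
    (M : ℝ) (hM : 1 ≤ M)
    (hdom : ∀ θ, π θ ≤ M * πhat θ) :
    (1 : ℝ) / M ≤ ∫ θ, (∫ ξ, π θ * πhat ξ
        * min 1 (π ξ * πhat θ / (π θ * πhat ξ)) ∂μ) ∂μ := by
  have hacc : ∀ θ ξ, π θ * πhat ξ * min 1 (π ξ * πhat θ / (π θ * πhat ξ))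
      = min (π θ * πhat ξ) (π ξ * πhat θ) := fun θ ξ =>
    mul_min_one_div_eq_min (mul_nonneg (hπ0 θ) (hπhat0 ξ)) (mul_nonneg (hπ0 ξ) (hπhat0 θ))
  simp only [hacc]
  calc (1 : ℝ) / M = (∫ θ, π θ ∂μ) ^ 2 / M := by rw [hπ1, one_pow]
    _ ≤ _ := sq_integral_div_le_integral_integral_min (by linarith) hπ0 hπint hπhatint hdom

/-- Lower bound in Theorem 3 of the AIMS paper: if the target density `π` is
dominated by `M` times the proposal density `π̂` (with `M ≥ 1`), then the
expected acceptance probability of Independent Metropolis–Hastings at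
stationarity, `Ā = ∫∫ π(θ) π̂(ξ) min{1, π(ξ)π̂(θ)/(π(θ)π̂(ξ))} dξ dθ`,
satisfies `Ā ≥ 1/M`. -/
theorem stmt_12 {α : Type*} [MeasurableSpace α] (μ : Measure α) [SigmaFinite μ]
    (π πhat : α → ℝ)
    (hπm : Measurable π) (hπhatm : Measurable πhat)
    (hπ0 : ∀ θ, 0 ≤ π θ) (hπhat0 : ∀ θ, 0 ≤ πhat θ)
    (hπ1 : ∫ θ, π θ ∂μ = 1) (hπhat1 : ∫ θ, πhat θ ∂μ = 1)
    (hπint : Integrable π μ) (hπhatint : Integrable πhat μ)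
    (M : ℝ) (hM : 1 ≤ M)
    (hdom : ∀ θ, π θ ≤ M * πhat θ) :
    (1 : ℝ) / M ≤ ∫ θ, (∫ ξ, π θ * πhat ξ
        * min 1 (π ξ * πhat θ / (π θ * πhat ξ)) ∂μ) ∂μ :=
  stmt_12_general μ π πhat hπ0 hπhat0 hπ1 hπint hπhatint M hM hdom
end

section
/- Let π_j be a probability density on Θ, fixed points θ^{(1)},...,θ^{(N)} with positive weights w̄^{(i)} summing to 1, q_j a symmetric proposal density, and define π̂(ξ) = Σ_i w̄^{(i)} q_j(ξ|θ^{(i)}) min{1, π_j(ξ)/π_j(θ^{(i)})}. Then the expected acceptance probability of the AIMS chain at stationarity, Ā = ∫∫ π_j(θ) π̂(ξ) min{1, (π_j(ξ)π̂(θ))/(π_j(θ)π̂(ξ))} dξ dθ, is at most Σ_{i=1}^N w̄^{(i)} a_j(θ^{(i)}), where a_j(η) = ∫ q_j(ξ|η) min{1, π_j(ξ)/π_j(η)} dξ is the local RWMH acceptance probability at η. -/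
/-!
Every Metropolis–Hastings acceptance probability is at most `1`, so the integrand of the global
acceptance rate is bounded by `π_j(θ) π̂(ξ)`. Integrating, `Ā ≤ (∫ π_j) (∫ π̂) = ∫ π̂`, and since
`π̂` is the `w̄`-mixture of the local acceptance densities, `∫ π̂ = ∑ᵢ w̄ⁱ a_j(θ⁽ⁱ⁾)`.
-/

open MeasureTheory

lemma min_one_nonneg {x : ℝ} (hx : 0 ≤ x) : 0 ≤ min 1 x := le_min zero_le_one hx

namespace MeasureTheory

variable {α : Type*} [MeasurableSpace α] {μ : Measure α}

lemma Integrable.mul_min_one {f g : α → ℝ} (hf : Integrable f μ) (hg : Measurable g)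
    (hg0 : 0 ≤ g) : Integrable (fun x => f x * min 1 (g x)) μ := by
  refine hf.mul_bdd (c := 1) (measurable_const.min hg).aestronglyMeasurable
    (.of_forall fun x => ?_)
  rw [Real.norm_of_nonneg (min_one_nonneg (hg0 x))]
  exact min_le_left _ _

lemma integral_mul_min_one_le {f g : α → ℝ} (hf : Integrable f μ) (hf0 : 0 ≤ f) (hg0 : 0 ≤ g) :
    ∫ x, f x * min 1 (g x) ∂μ ≤ ∫ x, f x ∂μ :=
  integral_mono_of_nonneg (.of_forall fun x => mul_nonneg (hf0 x) (min_one_nonneg (hg0 x))) hf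
    (.of_forall fun x => mul_le_of_le_one_right (hf0 x) (min_le_left _ _))

lemma integral_integral_mul_min_one_le {p f : α → ℝ} {g : α → α → ℝ}
    (hp : Integrable p μ) (hp0 : 0 ≤ p) (hf : Integrable f μ) (hf0 : 0 ≤ f) (hg0 : 0 ≤ g) :
    ∫ θ, (∫ ξ, p θ * f ξ * min 1 (g θ ξ) ∂μ) ∂μ ≤ (∫ θ, p θ ∂μ) * ∫ ξ, f ξ ∂μ := by
  rw [← integral_mul_const]
  refine integral_mono_of_nonneg (.of_forall fun θ => integral_nonneg fun ξ =>
    mul_nonneg (mul_nonneg (hp0 θ) (hf0 ξ)) (min_one_nonneg (hg0 θ ξ))) (hp.mul_const _)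
    (.of_forall fun θ => ?_)
  simp only [← integral_const_mul]
  exact integral_mul_min_one_le (hf.const_mul _) (fun ξ => mul_nonneg (hp0 θ) (hf0 ξ)) (hg0 θ)

end MeasureTheory

theorem stmt_13_general {α : Type*} [MeasurableSpace α] (μ : Measure α)
    (πj : α → ℝ) (hπjm : Measurable πj) (hπjpos : ∀ θ, 0 < πj θ)
    (hπj1 : ∫ θ, πj θ ∂μ = 1) (hπjint : Integrable πj μ)
    (N : ℕ) (pts : Fin N → α)
    (w : Fin N → ℝ) (hw : ∀ i, 0 < w i)
    (qj : α → α → ℝ)  -- `qj ξ η` is `q_j(ξ|η)`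
    (hq0 : ∀ ξ η, 0 ≤ qj ξ η)
    (hqint : ∀ η, Integrable (fun ξ => qj ξ η) μ)
    (πhat : α → ℝ)
    (hπhat : ∀ ξ, πhat ξ
      = ∑ i, w i * qj ξ (pts i) * min 1 (πj ξ / πj (pts i))) :
    ∫ θ, (∫ ξ, πj θ * πhat ξ
        * min 1 (πj ξ * πhat θ / (πj θ * πhat ξ)) ∂μ) ∂μ
      ≤ ∑ i, w i * ∫ ξ, qj ξ (pts i) * min 1 (πj ξ / πj (pts i)) ∂μ := by
  have hlocal : ∀ i, Integrable (fun ξ => qj ξ (pts i) * min 1 (πj ξ / πj (pts i))) μ := fun i =>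
    (hqint (pts i)).mul_min_one (hπjm.div_const _)
      fun ξ => div_nonneg (hπjpos ξ).le (hπjpos (pts i)).le
  have hπhat_eq : πhat = fun ξ => ∑ i, w i * (qj ξ (pts i) * min 1 (πj ξ / πj (pts i))) := by
    funext ξ
    simp only [hπhat, mul_assoc]
  have hπhat_int : Integrable πhat μ := 
    hπhat_eq ▸ integrable_finsetSum _ fun i _ => (hlocal i).const_mul (w i)
  have hπhat0 : 0 ≤ πhat := fun ξ => by
    rw [hπhat]
    exact Finset.sum_nonneg fun i _ => mul_nonneg (mul_nonneg (hw i).le (hq0 _ _))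
      (min_one_nonneg (div_nonneg (hπjpos ξ).le (hπjpos (pts i)).le))
  calc _ ≤ (∫ θ, πj θ ∂μ) * ∫ ξ, πhat ξ ∂μ :=
        integral_integral_mul_min_one_le hπjint (fun θ => (hπjpos θ).le) hπhat_int hπhat0
          fun θ ξ => div_nonneg (mul_nonneg (hπjpos ξ).le (hπhat0 θ))
            (mul_nonneg (hπjpos θ).le (hπhat0 ξ))
    _ = _ := by
      rw [hπj1, one_mul, hπhat_eq, integral_finsetSum _ fun i _ => (hlocal i).const_mul (w i)]
      simp only [integral_const_mul]

/-- Upper bound in Theorem 3 of the AIMS paper: the expected (global) acceptance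
probability of the AIMS chain at stationarity is at most the weighted local
random-walk Metropolis–Hastings acceptance rate `∑ᵢ w̄ⁱ a_j(θ⁽ⁱ⁾)`, where
`a_j(η) = ∫ q_j(ξ|η) min{1, π_j(ξ)/π_j(η)} dξ` and the global proposal is
`π̂(ξ) = ∑ᵢ w̄ⁱ q_j(ξ|θ⁽ⁱ⁾) min{1, π_j(ξ)/π_j(θ⁽ⁱ⁾)}`. -/
theorem stmt_13 {α : Type*} [MeasurableSpace α] (μ : Measure α) [SigmaFinite μ]
    (πj : α → ℝ) (hπjm : Measurable πj) (hπjpos : ∀ θ, 0 < πj θ)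
    (hπj1 : ∫ θ, πj θ ∂μ = 1) (hπjint : Integrable πj μ)
    (N : ℕ) (pts : Fin N → α)
    (w : Fin N → ℝ) (hw : ∀ i, 0 < w i) (hw1 : ∑ i, w i = 1)
    (qj : α → α → ℝ)  -- `qj ξ η` is `q_j(ξ|η)`
    (hqm : Measurable (Function.uncurry qj))
    (hq0 : ∀ ξ η, 0 ≤ qj ξ η) (hqsym : ∀ ξ η, qj ξ η = qj η ξ)
    (hqint : ∀ η, Integrable (fun ξ => qj ξ η) μ)
    (hq1 : ∀ η, ∫ ξ, qj ξ η ∂μ = 1)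
    (πhat : α → ℝ)
    (hπhat : ∀ ξ, πhat ξ
      = ∑ i, w i * qj ξ (pts i) * min 1 (πj ξ / πj (pts i))) :
    ∫ θ, (∫ ξ, πj θ * πhat ξ
        * min 1 (πj ξ * πhat θ / (πj θ * πhat ξ)) ∂μ) ∂μ
      ≤ ∑ i, w i * ∫ ξ, qj ξ (pts i) * min 1 (πj ξ / πj (pts i)) ∂μ :=
  stmt_13_general μ πj hπjm hπjpos hπj1 hπjint N pts w hw qj hq0 hqint πhat hπhat
end
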